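/- arXiv:2603.12976 — 2 statements merged into one kernel-verified Lean document; each statement's English description precedes it below -/
import Mathlib

section
/- Let F, F̃ : ℝ^d → ℝ be differentiable functions such that the gradient of F is L-Lipschitz for some L > 0 and F is bounded below by F* ∈ ℝ (i.e., F(w) ≥ F* for all w). Suppose there exist constants ω ∈ [0,1) and ε ≥ 0 such that for all w, ‖∇F̃(w) − ∇F(w)‖ ≤ ω·‖∇F(w)‖ + ε. Fix a step size η with 0 < η ≤ (1−ω)/(4·L·(1+ω)²), and define the iterates w_{t+1} = w_t − η·∇F̃(w_t) starting from any w_0. Then for every T ≥ 1, (1/T) · Σ_{t=0}^{T−1} ‖∇F(w_t)‖² ≤ 2·(F(w_0) − F*)/(η·(1−ω)·T) + 2·ε²/(1−ω)² + 2·L·η·ε²/(1−ω). -/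
/-! By the descent lemma for the `L`-smooth `F`, one inexact step `x - η g'` decreases `F` by at
least `η ⟪∇F x, g'⟫ - L η² / 2 ‖g'‖²`. The relative error bound gives
`⟪∇F x, g'⟫ ≥ (1 - ω) ‖∇F x‖² - ε ‖∇F x‖` and `‖g'‖² ≤ 2 (1 + ω)² ‖∇F x‖² + 2 ε²`; the step-size
restriction and Young's inequality each cost a quarter of `η (1 - ω) ‖∇F x‖²`, leaving a decrease
of `η (1 - ω) / 2 ‖∇F x‖²` up to the additive error `η ε² / (1 - ω) + L η² ε²`. Telescoping over
`T` steps and using `F ≥ F*` gives the bound. -/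

open Finset
open scoped InnerProductSpace

theorem sq_norm_le_of_norm_sub_le {E : Type*} [SeminormedAddCommGroup E] {g g' : E} {ω ε : ℝ}
    (h : ‖g' - g‖ ≤ ω * ‖g‖ + ε) :
    ‖g'‖ ^ 2 ≤ 2 * (1 + ω) ^ 2 * ‖g‖ ^ 2 + 2 * ε ^ 2 := by
  have hnorm : ‖g'‖ ≤ (1 + ω) * ‖g‖ + ε := by
    linarith [norm_le_norm_add_norm_sub' g' g]
  nlinarith [norm_nonneg g', sq_nonneg ((1 + ω) * ‖g‖ - ε)]

section InnerProductSpace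

variable {E : Type*} [NormedAddCommGroup E] [InnerProductSpace ℝ E]

theorem le_inner_of_norm_sub_le {g g' : E} {ω ε : ℝ} (h : ‖g' - g‖ ≤ ω * ‖g‖ + ε) :
    (1 - ω) * ‖g‖ ^ 2 - ε * ‖g‖ ≤ ⟪g, g'⟫_ℝ := by
  have hdev : |⟪g, g' - g⟫_ℝ| ≤ ‖g‖ * (ω * ‖g‖ + ε) :=
    (abs_real_inner_le_norm _ _).trans (mul_le_mul_of_nonneg_left h (norm_nonneg _))
  have hsplit : ⟪g, g'⟫_ℝ = ‖g‖ ^ 2 + ⟪g, g' - g⟫_ℝ := by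
    rw [inner_sub_right, real_inner_self_eq_norm_sq]; ring
  linarith [(abs_le.1 hdev).1]

variable [CompleteSpace E]

theorem hasDerivAt_comp_add_smul {F : E → ℝ} (hF : Differentiable ℝ F) (x v : E) (t : ℝ) :
    HasDerivAt (fun s : ℝ => F (x + s • v)) ⟪gradient F (x + t • v), v⟫_ℝ t := by
  have hline : HasDerivAt (fun s : ℝ => x + s • v) v t := by
    simpa using ((hasDerivAt_id t).smul_const v).const_add x
  have h := (hF (x + t • v)).hasGradientAt.hasFDerivAt.comp_hasDerivAt t hline
  rwa [InnerProductSpace.toDual_apply_apply] at h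

theorem le_add_inner_gradient_add_sq_of_lipschitz {F : E → ℝ} (hF : Differentiable ℝ F) {L : ℝ}
    (hLip : ∀ v w, ‖gradient F v - gradient F w‖ ≤ L * ‖v - w‖) (x v : E) :
    F (x + v) ≤ F x + ⟪gradient F x, v⟫_ℝ + L / 2 * ‖v‖ ^ 2 := by
  set φ : ℝ → ℝ := fun t => F (x + t • v) - t * ⟪gradient F x, v⟫_ℝ - L / 2 * ‖v‖ ^ 2 * t ^ 2
  have hφ : ∀ t, HasDerivAt φ
      (⟪gradient F (x + t • v) - gradient F x, v⟫_ℝ - L * ‖v‖ ^ 2 * t) t := by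
    intro t
    refine (((hasDerivAt_comp_add_smul hF x v t).sub
      ((hasDerivAt_id' t).mul_const ⟪gradient F x, v⟫_ℝ)).sub
      ((hasDerivAt_pow 2 t).const_mul (L / 2 * ‖v‖ ^ 2))).congr_deriv ?_
    rw [inner_sub_left]; ring
  have hslope : ∀ t, 0 ≤ t →
      ⟪gradient F (x + t • v) - gradient F x, v⟫_ℝ ≤ L * ‖v‖ ^ 2 * t := by
    intro t ht
    calc _ ≤ ‖gradient F (x + t • v) - gradient F x‖ * ‖v‖ := real_inner_le_norm _ _
      _ ≤ L * ‖x + t • v - x‖ * ‖v‖ := mul_le_mul_of_nonneg_right (hLip _ _) (norm_nonneg v)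
      _ = L * ‖v‖ ^ 2 * t := by
        rw [add_sub_cancel_left, norm_smul, Real.norm_of_nonneg ht]; ring
  have hanti : AntitoneOn φ (Set.Ici 0) :=
    antitoneOn_of_hasDerivWithinAt_nonpos (convex_Ici 0)
      (fun t _ => (hφ t).continuousAt.continuousWithinAt)
      (fun t _ => (hφ t).hasDerivWithinAt)
      (fun t ht => by
        rw [interior_Ici] at ht
        linarith [hslope t (le_of_lt ht)])
  have := hanti (Set.mem_Ici.2 le_rfl) (Set.mem_Ici.2 zero_le_one) zero_le_one
  simp only [φ, one_smul, zero_smul, add_zero, one_mul, zero_mul, one_pow, mul_one, mul_zero,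
    sub_zero, zero_pow two_ne_zero] at this
  linarith

theorem inexact_gradient_step_le {F : E → ℝ} (hF : Differentiable ℝ F) {L : ℝ} (hL : 0 ≤ L)
    (hLip : ∀ v w, ‖gradient F v - gradient F w‖ ≤ L * ‖v - w‖) {ω ε η : ℝ} (hω : ω < 1)
    (hη : 0 ≤ η) (hηL : η * (4 * L * (1 + ω) ^ 2) ≤ 1 - ω) {x g' : E}
    (hg' : ‖g' - gradient F x‖ ≤ ω * ‖gradient F x‖ + ε) :
    η * (1 - ω) / 2 * ‖gradient F x‖ ^ 2
      ≤ F x - F (x - η • g') + (η * ε ^ 2 / (1 - ω) + L * η ^ 2 * ε ^ 2) := by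
  set g := gradient F x
  have h1ω : 0 < 1 - ω := sub_pos.2 hω
  have hdescent : F (x - η • g') ≤ F x - η * ⟪g, g'⟫_ℝ + L / 2 * η ^ 2 * ‖g'‖ ^ 2 := by
    have := le_add_inner_gradient_add_sq_of_lipschitz hF hLip x (-(η • g'))
    rw [inner_neg_right, real_inner_smul_right, norm_neg, norm_smul, Real.norm_of_nonneg hη,
      ← sub_eq_add_neg] at this
    linarith
  have hinner := mul_le_mul_of_nonneg_left (le_inner_of_norm_sub_le hg') hη
  have hsq := mul_le_mul_of_nonneg_left (sq_norm_le_of_norm_sub_le hg')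
    (by positivity : 0 ≤ L / 2 * η ^ 2)
  have hsmall := mul_le_mul_of_nonneg_right hηL (by positivity : 0 ≤ η / 4 * ‖g‖ ^ 2)
  have hyoung : ε * ‖g‖ ≤ (1 - ω) / 4 * ‖g‖ ^ 2 + ε ^ 2 / (1 - ω) := by
    rw [← sub_nonneg]
    have : (1 - ω) / 4 * ‖g‖ ^ 2 + ε ^ 2 / (1 - ω) - ε * ‖g‖
        = ((1 - ω) * ‖g‖ - 2 * ε) ^ 2 / (4 * (1 - ω)) := by
      field_simp; ring
    rw [this]; positivity
  linear_combination hdescent + hinner + hsq + hsmall + mul_le_mul_of_nonneg_left hyoung hη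

end InnerProductSpace

theorem sum_range_le_of_le_sub_succ {a f : ℕ → ℝ} {C m : ℝ}
    (hstep : ∀ t, a t ≤ f t - f (t + 1) + C) (hm : ∀ t, m ≤ f t) (T : ℕ) :
    ∑ t ∈ range T, a t ≤ f 0 - m + T * C := by
  calc ∑ t ∈ range T, a t ≤ ∑ t ∈ range T, (f t - f (t + 1) + C) := sum_le_sum fun t _ => hstep t
    _ = f 0 - f T + T * C := by
      rw [sum_add_distrib, sum_range_sub', sum_const, card_range, nsmul_eq_mul]
    _ ≤ f 0 - m + T * C := by linarith [hm T]

theorem inexact_gd_convergence_general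
    {d : ℕ} (F Ft : EuclideanSpace ℝ (Fin d) → ℝ)
    (hF : Differentiable ℝ F)
    (L : ℝ) (hL : 0 < L)
    (hLip : ∀ v w, ‖gradient F v - gradient F w‖ ≤ L * ‖v - w‖)
    (Fstar : ℝ) (hbdd : ∀ w, Fstar ≤ F w)
    (ω ε : ℝ) (hω1 : ω < 1)
    (happrox : ∀ w, ‖gradient Ft w - gradient F w‖ ≤ ω * ‖gradient F w‖ + ε)
    (η : ℝ) (hη0 : 0 < η) (hη : η ≤ (1 - ω) / (4 * L * (1 + ω) ^ 2))
    (w : ℕ → EuclideanSpace ℝ (Fin d))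
    (hiter : ∀ t, w (t + 1) = w t - η • gradient Ft (w t))
    (T : ℕ) (hT : 1 ≤ T) :
    (1 / (T : ℝ)) * ∑ t ∈ Finset.range T, ‖gradient F (w t)‖ ^ 2
      ≤ 2 * (F (w 0) - Fstar) / (η * (1 - ω) * T)
        + 2 * ε ^ 2 / (1 - ω) ^ 2 + 2 * L * η * ε ^ 2 / (1 - ω) := by
  have h1ω : 0 < 1 - ω := sub_pos.2 hω1
  have hT0 : (0 : ℝ) < T := by exact_mod_cast hT
  have hηL : η * (4 * L * (1 + ω) ^ 2) ≤ 1 - ω := mul_le_of_le_div₀ h1ω.le (by positivity) hη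
  have hsum := sum_range_le_of_le_sub_succ (f := fun t => F (w t)) (fun t => by
    simp only [hiter t]
    exact inexact_gradient_step_le hF hL.le hLip hω1 hη0.le hηL (happrox (w t)))
    (fun t => hbdd (w t)) T
  rw [← mul_sum] at hsum
  calc (1 / (T : ℝ)) * ∑ t ∈ range T, ‖gradient F (w t)‖ ^ 2
      = 2 / (η * (1 - ω) * T) * (η * (1 - ω) / 2 * ∑ t ∈ range T, ‖gradient F (w t)‖ ^ 2) := by
        field_simp
    _ ≤ 2 / (η * (1 - ω) * T)
        * (F (w 0) - Fstar + T * (η * ε ^ 2 / (1 - ω) + L * η ^ 2 * ε ^ 2)) := by gcongr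
    _ = _ := by field_simp; ring

/-- **Theorem 1 core (SCOPE, deterministic).** Inexact gradient descent on an
`L`-smooth objective `F`, bounded below by `F*`, using the surrogate gradient `∇F̃`
that satisfies the relative approximation `‖∇F̃(w) − ∇F(w)‖ ≤ ω‖∇F(w)‖ + ε`, with step
size `0 < η ≤ (1−ω)/(4L(1+ω)²)`, drives the average squared gradient norm of `F` to a
floor of order `ε²/(1−ω)²` at rate `O(1/T)`. -/
theorem inexact_gd_convergence
    {d : ℕ} (F Ft : EuclideanSpace ℝ (Fin d) → ℝ)
    (hF : Differentiable ℝ F) (hFt : Differentiable ℝ Ft)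
    (L : ℝ) (hL : 0 < L)
    (hLip : ∀ v w, ‖gradient F v - gradient F w‖ ≤ L * ‖v - w‖)
    (Fstar : ℝ) (hbdd : ∀ w, Fstar ≤ F w)
    (ω ε : ℝ) (hω0 : 0 ≤ ω) (hω1 : ω < 1) (hε : 0 ≤ ε)
    (happrox : ∀ w, ‖gradient Ft w - gradient F w‖ ≤ ω * ‖gradient F w‖ + ε)
    (η : ℝ) (hη0 : 0 < η) (hη : η ≤ (1 - ω) / (4 * L * (1 + ω) ^ 2))
    (w : ℕ → EuclideanSpace ℝ (Fin d))
    (hiter : ∀ t, w (t + 1) = w t - η • gradient Ft (w t))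
    (T : ℕ) (hT : 1 ≤ T) :
    (1 / (T : ℝ)) * ∑ t ∈ Finset.range T, ‖gradient F (w t)‖ ^ 2
      ≤ 2 * (F (w 0) - Fstar) / (η * (1 - ω) * T)
        + 2 * ε ^ 2 / (1 - ω) ^ 2 + 2 * L * η * ε ^ 2 / (1 - ω) :=
  inexact_gd_convergence_general F Ft hF L hL hLip Fstar hbdd ω ε hω1 happrox η hη0 hη w hiter T hT
end

section
/- Let F, F̃ : ℝ^d → ℝ be differentiable functions such that the gradient of F is L-Lipschitz for some L > 0. Fix w ∈ ℝ^d and suppose ‖∇F̃(w) − ∇F(w)‖ ≤ ω·‖∇F(w)‖ + ε for constants ω ∈ [0,1) and ε ≥ 0. If 0 < η ≤ (1−ω)/(4·L·(1+ω)²) and w⁺ = w − η·∇F̃(w), then F(w⁺) ≤ F(w) − (η·(1−ω)/2)·‖∇F(w)‖² + η·ε²/(1−ω) + L·η²·ε². -/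
/-!
By the descent inequality for an `L`-smooth `F`, the step `w⁺ = w - η ∇F̃(w)` gives
`F w⁺ ≤ F w - η ⟪∇F w, ∇F̃ w⟫ + (L η² / 2) ‖∇F̃ w‖²`. The error bound makes the inner product
at least `(1 - ω) ‖∇F w‖² - ε ‖∇F w‖` and `‖∇F̃ w‖ ≤ (1 + ω) ‖∇F w‖ + ε`. The cross term
`ε ‖∇F w‖` is absorbed by AM-GM and, thanks to the step-size bound, the quadratic term costs at most
a quarter of the decrease `η (1 - ω) ‖∇F w‖²`, leaving half of it.
-/

open Set
open scoped RealInnerProductSpace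

theorem norm_le_of_norm_sub_le {E : Type*} [SeminormedAddCommGroup E] {x y : E} {ω ε : ℝ}
    (h : ‖y - x‖ ≤ ω * ‖x‖ + ε) : ‖y‖ ≤ (1 + ω) * ‖x‖ + ε := by
  linarith [norm_le_norm_add_norm_sub' y x]

section

variable {E : Type*} [NormedAddCommGroup E] [InnerProductSpace ℝ E]

theorem inner_ge_of_norm_sub_le {x y : E} {ω ε : ℝ} (h : ‖y - x‖ ≤ ω * ‖x‖ + ε) :
    (1 - ω) * ‖x‖ ^ 2 - ε * ‖x‖ ≤ ⟪x, y⟫ := by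
  have hxy := real_inner_le_norm x (x - y)
  rw [inner_sub_right, real_inner_self_eq_norm_sq, norm_sub_rev] at hxy
  nlinarith [mul_le_mul_of_nonneg_left h (norm_nonneg x)]

variable [CompleteSpace E]

theorem HasGradientAt.hasDerivAt_comp_add_smul {f : E → ℝ} {g x u : E} {t : ℝ}
    (h : HasGradientAt f g (x + t • u)) :
    HasDerivAt (fun s : ℝ => f (x + s • u)) (⟪g, u⟫) t := by
  have hline : HasDerivAt (fun s : ℝ => x + s • u) u t := by
    simpa using ((hasDerivAt_id t).smul_const u).const_add x
  exact (hasGradientAt_iff_hasFDerivAt.mp h).comp_hasDerivAt t hline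

theorem image_add_le_of_norm_gradient_sub_le {f : E → ℝ} (hf : Differentiable ℝ f) {L : ℝ}
    {x : E} (hLip : ∀ v, ‖gradient f v - gradient f x‖ ≤ L * ‖v - x‖) (u : E) :
    f (x + u) ≤ f x + ⟪gradient f x, u⟫ + L / 2 * ‖u‖ ^ 2 := by
  have key := image_le_of_deriv_right_le_deriv_boundary (a := 0) (b := 1)
    (f := fun t => f (x + t • u)) (f' := fun t => ⟪gradient f (x + t • u), u⟫)
    (B := fun t => f x + t * ⟪gradient f x, u⟫ + L / 2 * t ^ 2 * ‖u‖ ^ 2)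
    (B' := fun t => ⟪gradient f x, u⟫ + L * t * ‖u‖ ^ 2)
    ?_ ?_ ?_ ?_ ?_ ?_ (right_mem_Icc.2 zero_le_one)
  · simpa using key
  · exact (hf.continuous.comp (by fun_prop)).continuousOn
  · exact fun t _ => ((hf _).hasGradientAt.hasDerivAt_comp_add_smul).hasDerivWithinAt
  · simp
  · fun_prop
  · exact fun t _ => (((hasDerivAt_id' t).mul_const _).const_add _ |>.add
      (((hasDerivAt_pow 2 t).const_mul _).mul_const _)).hasDerivWithinAt.congr_deriv (by ring)
  · intro t ⟨ht, _⟩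
    calc ⟪gradient f (x + t • u), u⟫
        = ⟪gradient f x, u⟫ + ⟪gradient f (x + t • u) - gradient f x, u⟫ := by
          rw [inner_sub_left]; ring
      _ ≤ ⟪gradient f x, u⟫ + L * t * ‖u‖ ^ 2 := by
          gcongr
          calc ⟪gradient f (x + t • u) - gradient f x, u⟫
              ≤ ‖gradient f (x + t • u) - gradient f x‖ * ‖u‖ := real_inner_le_norm _ _
            _ ≤ L * ‖t • u‖ * ‖u‖ := by
                gcongr
                simpa using hLip (x + t • u)
            _ = L * t * ‖u‖ ^ 2 := by rw [norm_smul, Real.norm_of_nonneg ht]; ring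

end

/-- `G`, `P`, `N` stand for `‖∇F w‖`, `⟪∇F w, ∇F̃ w⟫` and `‖∇F̃ w‖`. -/
theorem inexact_step_bound {L ω ε η G P N : ℝ} (hL : 0 < L) (hω0 : 0 ≤ ω) (hω1 : ω < 1)
    (hη0 : 0 < η) (hη : η ≤ (1 - ω) / (4 * L * (1 + ω) ^ 2))
    (hP : (1 - ω) * G ^ 2 - ε * G ≤ P) (hN0 : 0 ≤ N) (hN : N ≤ (1 + ω) * G + ε) :
    -η * P + L / 2 * η ^ 2 * N ^ 2
      ≤ -(η * (1 - ω) / 2) * G ^ 2 + η * ε ^ 2 / (1 - ω) + L * η ^ 2 * ε ^ 2 := by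
  have hω : 0 < 1 - ω := by linarith
  have hstep : L * η * (1 + ω) ^ 2 ≤ (1 - ω) / 4 := by
    rw [le_div_iff₀ (by positivity)] at hη
    linarith
  have hcross : ε * G ≤ ε ^ 2 / (1 - ω) + (1 - ω) / 4 * G ^ 2 := by
    rw [div_add' _ _ _ hω.ne', le_div_iff₀ hω]
    nlinarith [sq_nonneg (2 * ε - (1 - ω) * G)]
  have hN2 : N ^ 2 ≤ 2 * (1 + ω) ^ 2 * G ^ 2 + 2 * ε ^ 2 := by
    nlinarith [sq_nonneg ((1 + ω) * G - ε)]
  have hquad : L / 2 * η ^ 2 * N ^ 2 ≤ η * (1 - ω) / 4 * G ^ 2 + L * η ^ 2 * ε ^ 2 := by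
    nlinarith [mul_le_mul_of_nonneg_left hN2 (by positivity : 0 ≤ L / 2 * η ^ 2),
      mul_le_mul_of_nonneg_right hstep (by positivity : 0 ≤ η * G ^ 2)]
  have hlin : -η * P ≤ -η * ((1 - ω) * G ^ 2) + η * (ε * G) := by
    linarith [mul_le_mul_of_nonneg_left hP hη0.le]
  nlinarith [mul_le_mul_of_nonneg_left hcross hη0.le, mul_div_assoc η (ε ^ 2) (1 - ω)]

theorem inexact_gd_one_step_descent_general
    {d : ℕ} (F Ft : EuclideanSpace ℝ (Fin d) → ℝ)
    (hF : Differentiable ℝ F)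
    (L : ℝ) (hL : 0 < L)
    (hLip : ∀ v u, ‖gradient F v - gradient F u‖ ≤ L * ‖v - u‖)
    (w : EuclideanSpace ℝ (Fin d))
    (ω ε : ℝ) (hω0 : 0 ≤ ω) (hω1 : ω < 1)
    (happrox : ‖gradient Ft w - gradient F w‖ ≤ ω * ‖gradient F w‖ + ε)
    (η : ℝ) (hη0 : 0 < η) (hη : η ≤ (1 - ω) / (4 * L * (1 + ω) ^ 2)) :
    F (w - η • gradient Ft w)
      ≤ F w - (η * (1 - ω) / 2) * ‖gradient F w‖ ^ 2
        + η * ε ^ 2 / (1 - ω) + L * η ^ 2 * ε ^ 2 := by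
  have hdescent :=
    image_add_le_of_norm_gradient_sub_le hF (fun v => hLip v w) (-(η • gradient Ft w))
  rw [← sub_eq_add_neg, inner_neg_right, real_inner_smul_right, norm_neg, norm_smul,
    Real.norm_of_nonneg hη0.le] at hdescent
  have hbound := inexact_step_bound hL hω0 hω1 hη0 hη (inner_ge_of_norm_sub_le happrox)
    (norm_nonneg _) (norm_le_of_norm_sub_le happrox)
  linarith

/-- **One-step descent lemma for inexact gradient descent (SCOPE, Theorem 1 proof).**
A single step along the surrogate gradient `∇F̃(w)`, which approximates `∇F(w)` with
relative error `ω` and additive error `ε`, decreases the `L`-smooth objective `F` up to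
an additive error of order `ε²`. -/
theorem inexact_gd_one_step_descent
    {d : ℕ} (F Ft : EuclideanSpace ℝ (Fin d) → ℝ)
    (hF : Differentiable ℝ F) (hFt : Differentiable ℝ Ft)
    (L : ℝ) (hL : 0 < L)
    (hLip : ∀ v u, ‖gradient F v - gradient F u‖ ≤ L * ‖v - u‖)
    (w : EuclideanSpace ℝ (Fin d))
    (ω ε : ℝ) (hω0 : 0 ≤ ω) (hω1 : ω < 1) (hε : 0 ≤ ε)
    (happrox : ‖gradient Ft w - gradient F w‖ ≤ ω * ‖gradient F w‖ + ε)
    (η : ℝ) (hη0 : 0 < η) (hη : η ≤ (1 - ω) / (4 * L * (1 + ω) ^ 2)) :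
    F (w - η • gradient Ft w)
      ≤ F w - (η * (1 - ω) / 2) * ‖gradient F w‖ ^ 2
        + η * ε ^ 2 / (1 - ω) + L * η ^ 2 * ε ^ 2 :=
  inexact_gd_one_step_descent_general F Ft hF L hL hLip w ω ε hω0 hω1 happrox η hη0 hη
end
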